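/- arXiv:2101.02097 — 2 statements merged into one kernel-verified Lean document; each statement's English description precedes it below -/
import Mathlib

section
/- Let β, γ, μ > 0 and α ∈ (0,1], and let x* = (1/(2β))[(β - (γ+μ)) + √((β - (γ+μ))² + 4αμβ)] be the positive equilibrium of the single-class SIS model with infective inflow. Then x* > α if and only if 1 - γ/β > α; x* < α iff 1 - γ/β < α; and x* = α iff 1 - γ/β = α. -/
/-!
`x*` is the positive root of `q x = β x² - (β - (γ + μ)) x - α μ`. On `x > 0` the function
`q x / x = β x - (β - (γ + μ)) - α μ / x` is strictly increasing and vanishes at `x*`, so `α`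
compares with `x*` as `q α / α = β (α - (1 - γ / β))` compares with `0`.
-/

open Set

/-- The larger root of `a x² - b x - c`. -/
noncomputable def largerRoot (a b c : ℝ) : ℝ := (b + √(b ^ 2 + 4 * a * c)) / (2 * a)

lemma largerRoot_pos {a b c : ℝ} (ha : 0 < a) (hc : 0 < c) : 0 < largerRoot a b c := by
  have hb : |b| < √(b ^ 2 + 4 * a * c) := by
    rw [← Real.sqrt_sq_eq_abs]
    exact Real.sqrt_lt_sqrt (sq_nonneg b) (by linarith [mul_pos ha hc])
  exact div_pos (by linarith [neg_abs_le b]) (by positivity)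

lemma largerRoot_isRoot {a b c : ℝ} (ha : 0 < a) (hc : 0 ≤ c) :
    a * largerRoot a b c ^ 2 - b * largerRoot a b c - c = 0 := by
  have hs := Real.sq_sqrt (show 0 ≤ b ^ 2 + 4 * a * c by positivity)
  unfold largerRoot
  generalize √(b ^ 2 + 4 * a * c) = s at hs ⊢
  field_simp
  linear_combination hs

lemma strictMonoOn_mul_sub_sub_div {a b c : ℝ} (ha : 0 < a) (hc : 0 ≤ c) :
    StrictMonoOn (fun x => a * x - b - c / x) (Ioi 0) := by
  intro x hx y _ hxy
  have : c / y ≤ c / x := div_le_div_of_nonneg_left hc hx hxy.le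
  have : a * x < a * y := mul_lt_mul_of_pos_left hxy ha
  simp only
  linarith

lemma compare_largerRoot {a b c y : ℝ} (ha : 0 < a) (hc : 0 < c) (hy : 0 < y) :
    compare y (largerRoot a b c) = compare (a * y - b - c / y) 0 := by
  have hr : 0 < largerRoot a b c := largerRoot_pos ha hc
  have hroot : a * largerRoot a b c - b - c / largerRoot a b c = 0 := by
    have := largerRoot_isRoot (b := b) ha hc.le
    field_simp
    linear_combination this
  rw [← hroot, compare_iff]
  exact ((strictMonoOn_mul_sub_sub_div ha hc.le).compares hy hr).1 ((compare_iff _ _).1 rfl)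

lemma compare_mul_sub_zero {p : ℝ} (hp : 0 < p) (y z : ℝ) :
    compare (p * (y - z)) 0 = compare y z := by
  have hmono : StrictMono fun t => p * (t - z) := fun s t hst => by
    simp only
    nlinarith
  rw [compare_iff]
  simpa only [sub_self, mul_zero] using hmono.compares.2 ((compare_iff y z).1 rfl)

theorem stmt_13_general (β γ μ α : ℝ) (hβ : 0 < β) (hμ : 0 < μ)
    (hα : α ∈ Set.Ioc (0 : ℝ) 1)
    (xstar : ℝ)
    (hx : xstar = (1 / (2 * β)) *
      ((β - (γ + μ)) + Real.sqrt ((β - (γ + μ)) ^ 2 + 4 * α * μ * β))) :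
    (α < xstar ↔ α < 1 - γ / β) ∧
    (xstar < α ↔ 1 - γ / β < α) ∧
    (xstar = α ↔ 1 - γ / β = α) := by
  have hα0 : 0 < α := hα.1
  have hroot : xstar = largerRoot β (β - (γ + μ)) (α * μ) := by
    rw [hx, largerRoot]
    ring_nf
  have key : compare α xstar = compare α (1 - γ / β) := by
    have hq : β * α - (β - (γ + μ)) - α * μ / α = β * (α - (1 - γ / β)) := by
      field_simp
      ring
    rw [hroot, compare_largerRoot hβ (mul_pos hα0 hμ) hα0, hq, compare_mul_sub_zero hβ]
  refine ⟨?_, ?_, ?_⟩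
  · rw [← compare_lt_iff_lt, key, compare_lt_iff_lt]
  · rw [← compare_gt_iff_gt, key, compare_gt_iff_gt]
  · rw [eq_comm, ← compare_eq_iff_eq, key, compare_eq_iff_eq, eq_comm]

/-- For the positive SIS equilibrium
`x* = (1/(2β))[(β-(γ+μ)) + √((β-(γ+μ))² + 4αμβ)]`:
`x* > α ↔ 1 - γ/β > α`, `x* < α ↔ 1 - γ/β < α`, and `x* = α ↔ 1 - γ/β = α`. -/
theorem stmt_13 (β γ μ α : ℝ) (hβ : 0 < β) (hγ : 0 < γ) (hμ : 0 < μ)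
    (hα : α ∈ Set.Ioc (0 : ℝ) 1)
    (xstar : ℝ)
    (hx : xstar = (1 / (2 * β)) *
      ((β - (γ + μ)) + Real.sqrt ((β - (γ + μ)) ^ 2 + 4 * α * μ * β))) :
    (α < xstar ↔ α < 1 - γ / β) ∧
    (xstar < α ↔ 1 - γ / β < α) ∧
    (xstar = α ↔ 1 - γ / β = α) :=
  stmt_13_general β γ μ α hβ hμ hα xstar hx
end

section
/- Let β, γ > 0, α ∈ (0,1], and for i = 1,2 let πⁱ > 0 with π¹ + π² = 1 and μⁱ > 0. Define gᵢ(ω) = πⁱ(βω + αμⁱ)/(βω + γ + μⁱ). Then the equation ω = g₁(ω) + g₂(ω) has a unique solution in (0,∞). -/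
/-- Cross-multiplication key lemma: `ω ↦ π(βω+a)/(βω+γ+μ)/ω` is strictly decreasing. -/
lemma key_aux (β γ μ a p x y : ℝ) (hβ : 0 < β) (ha : 0 < a) (hγ : 0 < γ) (hμ : 0 < μ)
    (hp : 0 < p) (hx : 0 < x) (hxy : x < y) :
    p * (β * y + a) / (β * y + γ + μ) * x < p * (β * x + a) / (β * x + γ + μ) * y := by
  have hy : 0 < y := hx.trans hxy
  have hdx : 0 < β * x + γ + μ := by positivity
  have hdy : 0 < β * y + γ + μ := by positivity
  rw [div_mul_eq_mul_div, div_mul_eq_mul_div, div_lt_div_iff₀ hdy hdx]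
  have hd : 0 < y - x := sub_pos.mpr hxy
  nlinarith [mul_pos hp (mul_pos hd (mul_pos (mul_pos hβ hβ) (mul_pos hx hy))),
    mul_pos hp (mul_pos hd (mul_pos ha (add_pos hγ hμ))),
    mul_pos hp (mul_pos hd (mul_pos (mul_pos ha hβ) (add_pos hx hy)))]

/-- For `ω ≥ 0`, `π(βω+αμ)/(βω+γ+μ) < π` when `α ≤ 1`. -/
lemma lt_pi_aux (β γ α μ p ω : ℝ) (hβ : 0 < β) (hγ : 0 < γ) (hα : α ≤ 1)
    (hμ : 0 < μ) (hp : 0 < p) (hω : 0 ≤ ω) :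
    p * (β * ω + α * μ) / (β * ω + γ + μ) < p := by
  have hd : 0 < β * ω + γ + μ := by positivity
  rw [div_lt_iff₀ hd]
  nlinarith [mul_pos hp hγ, mul_nonneg (mul_nonneg hp.le (sub_nonneg.mpr hα)) hμ.le]

/-- The fixed-point equation `ω = g₁(ω) + g₂(ω)` with
`gᵢ(ω) = πⁱ(βω + αμⁱ)/(βω + γ + μⁱ)` has a unique solution in `(0,∞)`. -/
theorem stmt_14 (β γ α π1 π2 μ1 μ2 : ℝ) (hβ : 0 < β) (hγ : 0 < γ)
    (hα : α ∈ Set.Ioc (0 : ℝ) 1)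
    (hπ1 : 0 < π1) (hπ2 : 0 < π2) (hπsum : π1 + π2 = 1)
    (hμ1 : 0 < μ1) (hμ2 : 0 < μ2)
    (g1 g2 : ℝ → ℝ)
    (hg1 : ∀ ω, g1 ω = π1 * (β * ω + α * μ1) / (β * ω + γ + μ1))
    (hg2 : ∀ ω, g2 ω = π2 * (β * ω + α * μ2) / (β * ω + γ + μ2)) :
    ∃! ω : ℝ, 0 < ω ∧ ω = g1 ω + g2 ω := by
  obtain ⟨hα0, hα1⟩ := hα
  set F : ℝ → ℝ := fun ω => ω - (π1 * (β * ω + α * μ1) / (β * ω + γ + μ1)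
      + π2 * (β * ω + α * μ2) / (β * ω + γ + μ2)) with hF
  -- continuity of F on [0,1]
  have hcont : ContinuousOn F (Set.Icc (0:ℝ) 1) := by
    apply ContinuousOn.sub continuousOn_id
    apply ContinuousOn.add
    · exact ContinuousOn.div (by fun_prop) (by fun_prop)
        (fun x hx => by have := hx.1; positivity)
    · exact ContinuousOn.div (by fun_prop) (by fun_prop)
        (fun x hx => by have := hx.1; positivity)
  -- F 0 < 0
  have hF0 : F 0 < 0 := by
    have h1 : 0 < π1 * (β * 0 + α * μ1) / (β * 0 + γ + μ1) := by positivity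
    have h2 : 0 < π2 * (β * 0 + α * μ2) / (β * 0 + γ + μ2) := by positivity
    simp only [hF]
    linarith
  -- F 1 > 0
  have hF1 : 0 < F 1 := by
    have h1 := lt_pi_aux β γ α μ1 π1 1 hβ hγ hα1 hμ1 hπ1 (by norm_num)
    have h2 := lt_pi_aux β γ α μ2 π2 1 hβ hγ hα1 hμ2 hπ2 (by norm_num)
    simp only [hF]
    linarith
  -- IVT
  have hsub := intermediate_value_Ioo (by norm_num : (0:ℝ) ≤ 1) hcont
  have h0mem : (0:ℝ) ∈ Set.Ioo (F 0) (F 1) := ⟨hF0, hF1⟩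
  obtain ⟨c, hc, hFc⟩ := hsub h0mem
  have hc0 : 0 < c := hc.1
  have hceq : c = g1 c + g2 c := by
    rw [hg1, hg2]
    have : F c = 0 := hFc
    simp only [hF] at this
    linarith
  refine ⟨c, ⟨hc0, hceq⟩, ?_⟩
  -- uniqueness
  have huniq : ∀ x y : ℝ, 0 < x → x = g1 x + g2 x → 0 < y → y = g1 y + g2 y →
      x < y → False := by
    intro x y hx hfx hy hfy hxy
    have k1 := key_aux β γ μ1 (α * μ1) π1 x y hβ (by positivity) hγ hμ1 hπ1 hx hxy
    have k2 := key_aux β γ μ2 (α * μ2) π2 x y hβ (by positivity) hγ hμ2 hπ2 hx hxy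
    have e1 : x * y = (g1 x) * y + (g2 x) * y := by linear_combination y * hfx
    have e2 : y * x = (g1 y) * x + (g2 y) * x := by linear_combination x * hfy
    rw [hg1, hg2] at e1 e2
    linarith
  rintro y ⟨hy0, hyeq⟩
  rcases lt_trichotomy y c with h | h | h
  · exact absurd (huniq y c hy0 hyeq hc0 hceq h) (fun f => f)
  · exact h
  · exact absurd (huniq c y hc0 hceq hy0 hyeq h) (fun f => f)
end
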